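/- For every x ∈ H, the transmuted comultiplication admits the alternative expression Δ̲(x) = Σᵢ Σ (βᵢ ▷ x₍₂₎) ⊗ αᵢ x₍₁₎; that is, Σᵢ Σ x₍₁₎ S(βᵢ) ⊗ (αᵢ ▷ x₍₂₎) = Σᵢ Σ (βᵢ ▷ x₍₂₎) ⊗ αᵢ x₍₁₎ in H ⊗ H. -/

import Mathlib

open scoped TensorProduct
open TensorProduct

variable (k : Type*) [CommRing k] (H : Type*) [Ring H] [HopfAlgebra k H]

/-- The antipode `S`. -/
noncomputable def aS : H →ₗ[k] H := HopfAlgebra.antipode (R := k)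

/-- Multiplication of `H` as a linear map on the tensor square. -/
noncomputable def mulH : H ⊗[k] H →ₗ[k] H := LinearMap.mul' k H

/-- The left adjoint action as a linear map `H ⊗ H → H`, `x ⊗ y ↦ Σ x₍₁₎ * y * S (x₍₂₎)`. -/
noncomputable def adT : H ⊗[k] H →ₗ[k] H :=
  mulH k H ∘ₗ
  LinearMap.lTensor H
    (mulH k H ∘ₗ (TensorProduct.comm k H H).toLinearMap ∘ₗ LinearMap.rTensor H (aS k H)) ∘ₗ
  (TensorProduct.assoc k H H H).toLinearMap ∘ₗ
  LinearMap.rTensor H (Coalgebra.comul (R := k))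

/-- The left adjoint action of a fixed element `x`, as a linear map `y ↦ x ▷ y`. -/
noncomputable def adL (x : H) : H →ₗ[k] H := adT k H ∘ₗ TensorProduct.mk k H H x

/-- The left adjoint action `x ▷ y = Σ x₍₁₎ y S(x₍₂₎)`. -/
noncomputable def ad (x y : H) : H := adL k H x y

variable {ι : Type*} [Fintype ι]

/-- The braiding of `Mod H` on `H ⊗ H`: `ψ(x ⊗ y) = Σᵢ (βᵢ ▷ y) ⊗ (αᵢ ▷ x)`. -/
noncomputable def psiL (α β : ι → H) : H ⊗[k] H →ₗ[k] H ⊗[k] H :=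
  ∑ i, (TensorProduct.map (adL k H (β i)) (adL k H (α i))) ∘ₗ
        (TensorProduct.comm k H H).toLinearMap

/-- The transmuted comultiplication `Δ̲(x) = Σᵢ Σ x₍₁₎ S(βᵢ) ⊗ (αᵢ ▷ x₍₂₎)`. -/
noncomputable def DeltaB (α β : ι → H) : H →ₗ[k] H ⊗[k] H :=
  ∑ i, (TensorProduct.map (LinearMap.mulRight k (aS k H (β i))) (adL k H (α i))) ∘ₗ
        (Coalgebra.comul (R := k))

/-- The transmuted antipode `S̲(x) = Σᵢ βᵢ S(αᵢ ▷ x)`. -/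
noncomputable def SB (α β : ι → H) : H →ₗ[k] H :=
  ∑ i, LinearMap.mulLeft k (β i) ∘ₗ aS k H ∘ₗ adL k H (α i)

/-!
Expanding the adjoint actions with `(Δ ⊗ id) R = R₁₃ R₂₃` and `(id ⊗ Δ) R = R₁₃ R₁₂` puts both
sides in the form `Σᵢ (1 ⊗ αᵢ) T (S βᵢ ⊗ 1)`: on the left `T = Δx · (S ⊗ S) R₂₁`, on the right
`T = R₂₁ · Δᵒᵖx`. Since `(S ⊗ S) R = R`, the two agree by `R Δx = Δᵒᵖx R` with the tensor factors
swapped. As for `(S ⊗ S) R = R`: the antipode axioms make `(S ⊗ id) R` a left inverse both of the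
invertible `R` and of `(S ⊗ S) R`, once the counit identities `(ε ⊗ id) R = 1 = (id ⊗ ε) R` are
known.
-/

section QuasitriangularIdentities

variable {k H}

open Coalgebra (comul counit)
open HopfAlgebra (antipode)

lemma adL_apply (a y : H) :
    adL k H a y = LinearMap.mul' k H (map (LinearMap.mulRight k y) (antipode k) (comul a)) := by
  unfold adL adT
  simp only [LinearMap.comp_apply, TensorProduct.mk_apply, LinearMap.rTensor_tmul]
  induction comul (R := k) a using TensorProduct.induction_on with
  | zero => simp only [zero_tmul, map_zero]
  | tmul p q => simp [mulH, aS, mul_assoc]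
  | add u v hu hv => simp only [map_add, add_tmul, hu, hv]

variable (α β : ι → H)

local notation "𝓡" => ∑ i, α i ⊗ₜ[k] β i

lemma rTensor_comul_eq_sum_sum
    (h : LinearMap.rTensor H (comul (R := k)) 𝓡
        = (∑ i, (α i ⊗ₜ[k] (1 : H)) ⊗ₜ[k] β i) * (∑ i, ((1 : H) ⊗ₜ[k] α i) ⊗ₜ[k] β i)) :
    LinearMap.rTensor H (comul (R := k)) 𝓡 = ∑ i, ∑ j, (α i ⊗ₜ[k] α j) ⊗ₜ[k] (β i * β j) := by
  simp [h, Finset.sum_mul_sum, Algebra.TensorProduct.tmul_mul_tmul]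

lemma lTensor_comul_eq_sum_sum
    (h : LinearMap.lTensor H (comul (R := k)) 𝓡
        = (∑ i, α i ⊗ₜ[k] ((1 : H) ⊗ₜ[k] β i)) * (∑ i, α i ⊗ₜ[k] (β i ⊗ₜ[k] (1 : H)))) :
    LinearMap.lTensor H (comul (R := k)) 𝓡 = ∑ i, ∑ j, (α i * α j) ⊗ₜ[k] (β j ⊗ₜ[k] β i) := by
  simp [h, Finset.sum_mul_sum, Algebra.TensorProduct.tmul_mul_tmul]

lemma sum_counit_smul_eq_one_of_rTensor_comul (R' : H ⊗[k] H) (hinv : 𝓡 * R' = 1)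
    (hΔ : LinearMap.rTensor H (comul (R := k)) 𝓡 = ∑ i, ∑ j, (α i ⊗ₜ[k] α j) ⊗ₜ[k] (β i * β j)) :
    ∑ i, counit (R := k) (α i) • β i = 1 := by
  set u := ∑ i, counit (R := k) (α i) • β i
  have hfix : ((1 : H) ⊗ₜ[k] u) * 𝓡 = 𝓡 := by
    have h := congrArg (LinearMap.rTensor H
      ((TensorProduct.lid k H).toLinearMap ∘ₗ LinearMap.rTensor H (counit (R := k)))) hΔ
    simp only [map_sum, LinearMap.rTensor_tmul, LinearMap.comp_apply,
      Coalgebra.rTensor_counit_comul, LinearEquiv.coe_coe, TensorProduct.lid_tmul, one_smul] at h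
    conv_rhs => rw [h]
    rw [Finset.mul_sum, Finset.sum_comm]
    simp [u, Algebra.TensorProduct.tmul_mul_tmul, Finset.sum_mul, tmul_sum, smul_tmul']
  have h1 : (1 : H) ⊗ₜ[k] u = 1 := by
    rw [← mul_one ((1 : H) ⊗ₜ[k] u), ← hinv, ← mul_assoc, hfix]
  simpa [Algebra.TensorProduct.one_def] using
    congrArg ((TensorProduct.lid k H).toLinearMap ∘ₗ LinearMap.rTensor H (counit (R := k))) h1

lemma sum_counit_smul_eq_one_of_lTensor_comul (R' : H ⊗[k] H) (hinv : R' * 𝓡 = 1)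
    (hΔ : LinearMap.lTensor H (comul (R := k)) 𝓡 = ∑ i, ∑ j, (α i * α j) ⊗ₜ[k] (β j ⊗ₜ[k] β i)) :
    ∑ i, counit (R := k) (β i) • α i = 1 := by
  set v := ∑ i, counit (R := k) (β i) • α i
  have hfix : 𝓡 * (v ⊗ₜ[k] (1 : H)) = 𝓡 := by
    have h := congrArg (LinearMap.lTensor H
      ((TensorProduct.lid k H).toLinearMap ∘ₗ LinearMap.rTensor H (counit (R := k)))) hΔ
    simp only [map_sum, LinearMap.lTensor_tmul, LinearMap.comp_apply,
      Coalgebra.rTensor_counit_comul, LinearEquiv.coe_coe, TensorProduct.lid_tmul, one_smul] at h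
    conv_rhs => rw [h]
    rw [Finset.sum_mul]
    simp [v, Algebra.TensorProduct.tmul_mul_tmul, Finset.mul_sum, sum_tmul, smul_tmul']
  have h1 : v ⊗ₜ[k] (1 : H) = 1 := by
    rw [← one_mul (v ⊗ₜ[k] (1 : H)), ← hinv, mul_assoc, hfix]
  simpa [Algebra.TensorProduct.one_def] using
    congrArg ((TensorProduct.rid k H).toLinearMap ∘ₗ LinearMap.lTensor H (counit (R := k))) h1

lemma sum_antipode_tmul_mul_eq_one (hu : ∑ i, counit (R := k) (α i) • β i = 1)
    (hΔ : LinearMap.rTensor H (comul (R := k)) 𝓡 = ∑ i, ∑ j, (α i ⊗ₜ[k] α j) ⊗ₜ[k] (β i * β j)) :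
    (∑ i, antipode k (α i) ⊗ₜ[k] β i) * 𝓡 = 1 := by
  have h := congrArg (LinearMap.rTensor H
    (LinearMap.mul' k H ∘ₗ LinearMap.rTensor H (antipode k))) hΔ
  simp only [map_sum, LinearMap.rTensor_tmul, LinearMap.comp_apply,
    HopfAlgebra.mul_antipode_rTensor_comul_apply, LinearMap.mul'_apply] at h
  have hL : ∑ i, algebraMap k H (counit (α i)) ⊗ₜ[k] β i = 1 := by
    simp_rw [Algebra.algebraMap_eq_smul_one, smul_tmul, ← tmul_sum, hu,
      Algebra.TensorProduct.one_def]
  rw [← hL, h, Finset.sum_mul_sum]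
  simp only [Algebra.TensorProduct.tmul_mul_tmul]

lemma sum_antipode_tmul_mul_sum_antipode_tmul_antipode_eq_one
    (hv : ∑ i, counit (R := k) (β i) • α i = 1)
    (hΔ : LinearMap.lTensor H (comul (R := k)) 𝓡 = ∑ i, ∑ j, (α i * α j) ⊗ₜ[k] (β j ⊗ₜ[k] β i)) :
    (∑ i, antipode k (α i) ⊗ₜ[k] β i) * (∑ i, antipode k (α i) ⊗ₜ[k] antipode k (β i)) = 1 := by
  have h := congrArg (TensorProduct.map (antipode k)
    (LinearMap.mul' k H ∘ₗ LinearMap.lTensor H (antipode k))) hΔ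
  simp only [map_sum, LinearMap.lTensor_tmul, TensorProduct.map_tmul, LinearMap.comp_apply,
    HopfAlgebra.mul_antipode_lTensor_comul_apply, LinearMap.mul'_apply,
    HopfAlgebra.antipode_mul_antidistrib] at h
  have hL : ∑ i, antipode k (α i) ⊗ₜ[k] algebraMap k H (counit (β i)) = 1 := by
    calc _ = antipode k (∑ i, counit (R := k) (β i) • α i) ⊗ₜ[k] (1 : H) := by
          simp [map_sum, sum_tmul, Algebra.algebraMap_eq_smul_one, smul_tmul]
      _ = 1 := by rw [hv, HopfAlgebra.antipode_one, Algebra.TensorProduct.one_def]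
  rw [← hL, h, Finset.sum_mul_sum, Finset.sum_comm]
  simp only [Algebra.TensorProduct.tmul_mul_tmul]

lemma sum_antipode_tmul_antipode_eq (R' : H ⊗[k] H) (hinv : 𝓡 * R' = 1 ∧ R' * 𝓡 = 1)
    (hΔ₁ : LinearMap.rTensor H (comul (R := k)) 𝓡 = ∑ i, ∑ j, (α i ⊗ₜ[k] α j) ⊗ₜ[k] (β i * β j))
    (hΔ₂ : LinearMap.lTensor H (comul (R := k)) 𝓡 = ∑ i, ∑ j, (α i * α j) ⊗ₜ[k] (β j ⊗ₜ[k] β i)) :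
    ∑ i, antipode k (α i) ⊗ₜ[k] antipode k (β i) = 𝓡 := by
  have hleft := sum_antipode_tmul_mul_eq_one α β
    (sum_counit_smul_eq_one_of_rTensor_comul α β R' hinv.1 hΔ₁) hΔ₁
  have hright := sum_antipode_tmul_mul_sum_antipode_tmul_antipode_eq_one α β
    (sum_counit_smul_eq_one_of_lTensor_comul α β R' hinv.2 hΔ₂) hΔ₂
  rw [left_inv_eq_right_inv hleft hinv.1] at hright
  exact (left_inv_eq_right_inv hinv.1 hright).symm

lemma mul_comul_eq_comm_comul_mul (R' : H ⊗[k] H) (hinv : R' * 𝓡 = 1)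
    (hqt1 : ∀ x : H, 𝓡 * comul (R := k) x * R' = TensorProduct.comm k H H (comul (R := k) x))
    (x : H) :
    𝓡 * comul (R := k) x = TensorProduct.comm k H H (comul (R := k) x) * 𝓡 := by
  rw [← hqt1, mul_assoc _ R', hinv, mul_one]

lemma sum_map_mulRight_adL_eq
    (hΔ : LinearMap.rTensor H (comul (R := k)) 𝓡 = ∑ i, ∑ j, (α i ⊗ₜ[k] α j) ⊗ₜ[k] (β i * β j))
    (t : H ⊗[k] H) :
    ∑ i, map (LinearMap.mulRight k (antipode k (β i))) (adL k H (α i)) t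
      = ∑ i, ((1 : H) ⊗ₜ[k] α i) * (t * ∑ j, antipode k (β j) ⊗ₜ[k] antipode k (α j)) *
          (antipode k (β i) ⊗ₜ[k] (1 : H)) := by
  induction t using TensorProduct.induction_on with
  | zero => simp
  | add t t' ht ht' => simp only [map_add, Finset.sum_add_distrib, ht, ht', add_mul, mul_add]
  | tmul a b =>
    have h := congrArg (map (LinearMap.mulLeft k a ∘ₗ antipode k)
      (LinearMap.mul' k H ∘ₗ map (LinearMap.mulRight k b) (antipode k)) ∘ₗ
      (TensorProduct.comm k (H ⊗[k] H) H).toLinearMap) hΔ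
    simp only [map_sum, LinearMap.comp_apply, LinearMap.rTensor_tmul, LinearEquiv.coe_coe,
      TensorProduct.comm_tmul, map_tmul, LinearMap.mulLeft_apply] at h
    simp only [map_tmul, adL_apply, LinearMap.mulRight_apply, h]
    simp only [LinearMap.mul'_apply, HopfAlgebra.antipode_mul_antidistrib,
      Finset.mul_sum, Finset.sum_mul, Algebra.TensorProduct.tmul_mul_tmul, one_mul, mul_one,
      mul_assoc]

lemma sum_map_adL_mulLeft_eq
    (hΔ : LinearMap.lTensor H (comul (R := k)) 𝓡 = ∑ i, ∑ j, (α i * α j) ⊗ₜ[k] (β j ⊗ₜ[k] β i))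
    (t : H ⊗[k] H) :
    ∑ i, map (adL k H (β i)) (LinearMap.mulLeft k (α i)) t
      = ∑ i, ((1 : H) ⊗ₜ[k] α i) * ((∑ j, β j ⊗ₜ[k] α j) * t) *
          (antipode k (β i) ⊗ₜ[k] (1 : H)) := by
  induction t using TensorProduct.induction_on with
  | zero => simp
  | add t t' ht ht' => simp only [map_add, Finset.sum_add_distrib, ht, ht', add_mul, mul_add]
  | tmul a b =>
    have h := congrArg (map (LinearMap.mul' k H ∘ₗ map (LinearMap.mulRight k a) (antipode k))
      (LinearMap.mulRight k b) ∘ₗ (TensorProduct.comm k H (H ⊗[k] H)).toLinearMap) hΔ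
    simp only [map_sum, LinearMap.comp_apply, LinearMap.lTensor_tmul, LinearEquiv.coe_coe,
      TensorProduct.comm_tmul, map_tmul, LinearMap.mulRight_apply] at h
    simp only [map_tmul, adL_apply, LinearMap.mulLeft_apply, h]
    simp only [LinearMap.mul'_apply, Finset.mul_sum, Finset.sum_mul,
      Algebra.TensorProduct.tmul_mul_tmul, one_mul, mul_one, mul_assoc]

end QuasitriangularIdentities

/-- Alternative expression for the transmuted comultiplication:
`Δ̲(x) = Σᵢ Σ (βᵢ ▷ x₍₂₎) ⊗ αᵢ x₍₁₎`. -/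
theorem DeltaB_eq_alt
    (α β : ι → H) (R' : H ⊗[k] H)
    (hinv : (∑ i, α i ⊗ₜ[k] β i) * R' = 1 ∧ R' * (∑ i, α i ⊗ₜ[k] β i) = 1)
    (hqt1 : ∀ x : H, (∑ i, α i ⊗ₜ[k] β i) * Coalgebra.comul (R := k) x * R'
        = TensorProduct.comm k H H (Coalgebra.comul (R := k) x))
    (hqt2 : LinearMap.rTensor H (Coalgebra.comul (R := k)) (∑ i, α i ⊗ₜ[k] β i)
        = (∑ i, (α i ⊗ₜ[k] (1 : H)) ⊗ₜ[k] β i) * (∑ i, ((1 : H) ⊗ₜ[k] α i) ⊗ₜ[k] β i))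
    (hqt3 : LinearMap.lTensor H (Coalgebra.comul (R := k)) (∑ i, α i ⊗ₜ[k] β i)
        = (∑ i, α i ⊗ₜ[k] ((1 : H) ⊗ₜ[k] β i)) * (∑ i, α i ⊗ₜ[k] (β i ⊗ₜ[k] (1 : H))))
    (x : H) :
    DeltaB k H α β x
      = ∑ i, TensorProduct.map (adL k H (β i)) (LinearMap.mulLeft k (α i))
          (TensorProduct.comm k H H (Coalgebra.comul (R := k) x)) := by
  have hΔ₁ := rTensor_comul_eq_sum_sum α β hqt2
  have hΔ₂ := lTensor_comul_eq_sum_sum α β hqt3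
  have hSS : ∑ j, HopfAlgebra.antipode k (β j) ⊗ₜ[k] HopfAlgebra.antipode k (α j)
      = ∑ j, β j ⊗ₜ[k] α j := by
    simpa using congrArg (TensorProduct.comm k H H)
      (sum_antipode_tmul_antipode_eq α β R' hinv hΔ₁ hΔ₂)
  have hexchange : Coalgebra.comul (R := k) x * ∑ j, β j ⊗ₜ[k] α j
      = (∑ j, β j ⊗ₜ[k] α j) * TensorProduct.comm k H H (Coalgebra.comul (R := k) x) := by
    have h := congrArg (Algebra.TensorProduct.comm k H H)
      (mul_comul_eq_comm_comul_mul α β R' hinv.2 hqt1 x).symm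
    simp only [map_mul, map_sum, Algebra.TensorProduct.comm_tmul] at h
    change TensorProduct.comm k H H (TensorProduct.comm k H H _) * _ = _ at h
    rwa [TensorProduct.comm_comm] at h
  simp only [DeltaB, aS, LinearMap.sum_apply, LinearMap.comp_apply]
  rw [sum_map_mulRight_adL_eq α β hΔ₁, sum_map_adL_mulLeft_eq α β hΔ₂, hSS, hexchange]
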